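/- Let g be a standard Gaussian random variable and r ∈ ℝ. Then E[sign(g·r)·g] = sign(r)·√(2/π) when r ≠ 0; more generally, for a standard Gaussian vector s ∈ ℝ^D and fixed vectors r, y ∈ ℝ^D with r ≠ 0, E[ sign(⟨s, r⟩)·⟨s, y⟩ ] = √(2/π)·⟨r, y⟩/‖r‖. -/

import Mathlib

/-!
Write `y = c • r + z` with `c = ⟪r, y⟫ / ‖r‖²` and `z ⟂ r`. Since `sign(t) · t = |t|`, the `r`-part
contributes `c · E|⟪r, s⟫|`, and `⟪r, s⟫` is a centred Gaussian of variance `‖r‖²`, whose first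
absolute moment is `√(2/π) · ‖r‖`. The `z`-part contributes nothing: the reflection in `z⟂`
preserves the standard Gaussian measure, fixes `⟪r, s⟫` and negates `⟪z, s⟫`. The scalar identity
is the same moment computation, as `sign(g r₀) g = sign(r₀) |g|`.
-/

open MeasureTheory ProbabilityTheory

/-- sign(t) = +1 if t ≥ 0, −1 otherwise. -/
noncomputable def qSign (t : ℝ) : ℝ := if 0 ≤ t then 1 else -1

open Real Set
open scoped NNReal RealInnerProductSpace

@[fun_prop]
lemma measurable_qSign : Measurable qSign :=
  Measurable.ite measurableSet_Ici measurable_const measurable_const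

lemma abs_qSign (t : ℝ) : |qSign t| = 1 := by
  unfold qSign; split_ifs <;> simp

lemma qSign_mul_self (t : ℝ) : qSign t * t = |t| := by
  unfold qSign
  split_ifs with h
  · rw [one_mul, abs_of_nonneg h]
  · rw [abs_of_neg (not_le.1 h), neg_one_mul]

lemma qSign_mul_mul_self {b : ℝ} (hb : b ≠ 0) (t : ℝ) : qSign (t * b) * t = qSign b * |t| := by
  unfold qSign
  rcases hb.lt_or_gt with hb | hb <;> split_ifs <;>
    rcases abs_cases t with ⟨ht, _⟩ | ⟨ht, _⟩ <;> nlinarith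

lemma integral_Ioi_mul_exp_neg_sq_div_two : ∫ x in Ioi (0 : ℝ), x * exp (-x ^ 2 / 2) = 1 := by
  have h := integral_rpow_mul_exp_neg_mul_rpow (p := 2) (q := 1) (b := 1 / 2) two_pos
    (by norm_num) (by norm_num)
  norm_num [Real.Gamma_one] at h
  rw [← h]
  refine setIntegral_congr_fun measurableSet_Ioi fun x _ => ?_
  ring_nf

lemma integral_abs_gaussianReal_zero_one : ∫ x, |x| ∂gaussianReal 0 1 = √(2 / π) := by
  have hpdf (x : ℝ) :
      gaussianPDFReal 0 1 x • |x| = (√(2 * π))⁻¹ * (|x| * exp (-|x| ^ 2 / 2)) := by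
    simp only [gaussianPDFReal, sq_abs, smul_eq_mul]
    push_cast
    ring_nf
  simp_rw [integral_gaussianReal_eq_integral_smul one_ne_zero, hpdf]
  rw [integral_const_mul, integral_comp_abs (f := fun t => t * exp (-t ^ 2 / 2)),
    integral_Ioi_mul_exp_neg_sq_div_two, sqrt_div' _ pi_pos.le, sqrt_mul' _ pi_pos.le]
  have : √2 ≠ 0 := by positivity
  field_simp
  rw [sq_sqrt zero_le_two]

lemma integral_abs_gaussianReal (v : ℝ≥0) : ∫ x, |x| ∂gaussianReal 0 v = √(2 / π) * √v := by
  have hscale : (gaussianReal 0 1).map (√v * ·) = gaussianReal 0 v := by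
    rw [gaussianReal_map_const_mul]
    congr 1
    · simp
    · ext; simp
  rw [← hscale, integral_map (by fun_prop) (by fun_prop)]
  simp_rw [abs_mul, abs_of_nonneg (sqrt_nonneg _)]
  rw [integral_const_mul, integral_abs_gaussianReal_zero_one, mul_comm]

section StdGaussian

variable {E : Type*} [NormedAddCommGroup E] [InnerProductSpace ℝ E] [FiniteDimensional ℝ E]
  [MeasurableSpace E] [BorelSpace E]

lemma stdGaussian_map_inner (r : E) :
    (stdGaussian E).map (⟪r, ·⟫) = gaussianReal 0 (‖r‖₊ ^ 2) := by
  have h := IsGaussian.map_eq_gaussianReal (μ := stdGaussian E) (innerSL ℝ r)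
  rw [integral_strongDual_stdGaussian, variance_dual_stdGaussian, innerSL_apply_norm] at h
  convert h using 2 <;> ext <;> simp

lemma integral_abs_inner_stdGaussian (r : E) :
    ∫ x, |⟪r, x⟫| ∂stdGaussian E = √(2 / π) * ‖r‖ := by
  rw [← integral_map (f := fun t : ℝ => |t|) (by fun_prop) (by fun_prop), stdGaussian_map_inner,
    integral_abs_gaussianReal]
  simp

lemma integrable_inner_stdGaussian (r : E) : Integrable (⟪r, ·⟫) (stdGaussian E) :=
  IsGaussian.integrable_dual _ (innerSL ℝ r)

lemma integrable_qSign_inner_mul_inner (r y : E) :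
    Integrable (fun x => qSign ⟪r, x⟫ * ⟪y, x⟫) (stdGaussian E) := by
  refine (integrable_inner_stdGaussian y).mono (by fun_prop) (ae_of_all _ fun x => ?_)
  simp [abs_qSign]

lemma integral_qSign_inner_mul_inner_of_inner_eq_zero {r z : E} (h : ⟪r, z⟫ = 0) :
    ∫ x, qSign ⟪r, x⟫ * ⟪z, x⟫ ∂stdGaussian E = 0 := by
  set R := (ℝ ∙ z)ᗮ.reflection
  have hr : R r = r := Submodule.reflection_mem_subspace_eq_self
    (Submodule.mem_orthogonal_singleton_iff_inner_right.2 (by rwa [real_inner_comm]))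
  have hz : R z = -z := Submodule.reflection_orthogonalComplement_singleton_eq_neg z
  have hflip (x : E) : qSign ⟪r, R x⟫ * ⟪z, R x⟫ = -(qSign ⟪r, x⟫ * ⟪z, x⟫) := by
    have h₁ : ⟪r, R x⟫ = ⟪r, x⟫ := by rw [← R.inner_map_map r x, hr]
    have h₂ : ⟪z, R x⟫ = -⟪z, x⟫ := by rw [← R.inner_map_map z x, hz, inner_neg_left, neg_neg]
    rw [h₁, h₂, mul_neg]
  have hinv : ∫ x, qSign ⟪r, R x⟫ * ⟪z, R x⟫ ∂stdGaussian E =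
      ∫ x, qSign ⟪r, x⟫ * ⟪z, x⟫ ∂stdGaussian E := by
    conv_rhs => rw [← stdGaussian_map R]
    rw [integral_map (by fun_prop) (by fun_prop)]
  simp_rw [hflip, integral_neg] at hinv
  linarith

lemma integral_qSign_inner_mul_inner {r : E} (hr : r ≠ 0) (y : E) :
    ∫ x, qSign ⟪r, x⟫ * ⟪y, x⟫ ∂stdGaussian E = √(2 / π) * ⟪r, y⟫ / ‖r‖ := by
  have hr' : ‖r‖ ≠ 0 := norm_ne_zero_iff.2 hr
  set c := ⟪r, y⟫ / ‖r‖ ^ 2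
  set z := y - c • r
  have hz : ⟪r, z⟫ = 0 := by
    simp only [z, c, inner_sub_right, inner_smul_right, real_inner_self_eq_norm_sq]
    field_simp
    ring
  have hsplit (x : E) : qSign ⟪r, x⟫ * ⟪y, x⟫ = c * |⟪r, x⟫| + qSign ⟪r, x⟫ * ⟪z, x⟫ := by
    rw [← qSign_mul_self, show y = c • r + z by simp [z], inner_add_left, real_inner_smul_left]
    ring
  simp_rw [hsplit]
  rw [integral_add ((integrable_inner_stdGaussian r).abs.const_mul c)
      (integrable_qSign_inner_mul_inner r z),
    integral_const_mul, integral_abs_inner_stdGaussian,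
    integral_qSign_inner_mul_inner_of_inner_eq_zero hz, add_zero]
  simp only [c]
  field_simp

end StdGaussian

lemma integral_pi_gaussianReal_eq_integral_stdGaussian {ι : Type*} [Fintype ι]
    (f : (ι → ℝ) → ℝ) :
    ∫ s, f s ∂Measure.pi (fun _ : ι => gaussianReal 0 1) =
      ∫ x, f x.ofLp ∂stdGaussian (EuclideanSpace ℝ ι) := by
  rw [← map_pi_eq_stdGaussian, ← MeasurableEquiv.coe_toLp, integral_map_equiv]
  rfl

/-- Gaussian identity underlying QJL: for a standard Gaussian g,
E[sign(g·r)·g] = sign(r)·√(2/π) for r ≠ 0; for a standard Gaussian vector s,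
E[sign(⟨s,r⟩)·⟨s,y⟩] = √(2/π)·⟨r,y⟩/‖r‖. -/
theorem stmt_7 (D : ℕ) (r₀ : ℝ) (hr₀ : r₀ ≠ 0)
    (r y : Fin D → ℝ) (hr : r ≠ 0) :
    (∫ g, qSign (g * r₀) * g ∂(gaussianReal 0 1)) = qSign r₀ * Real.sqrt (2 / Real.pi) ∧
      (∫ s : Fin D → ℝ, qSign (∑ j, s j * r j) * (∑ j, s j * y j)
          ∂(Measure.pi fun _ : Fin D => gaussianReal 0 1)) =
        Real.sqrt (2 / Real.pi) * (∑ j, r j * y j) / Real.sqrt (∑ j, r j ^ 2) := by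
  constructor
  · simp_rw [qSign_mul_mul_self hr₀]
    rw [integral_const_mul, integral_abs_gaussianReal_zero_one]
  · have hr' : WithLp.toLp 2 r ≠ 0 := by simpa using hr
    have key := integral_qSign_inner_mul_inner hr' (WithLp.toLp 2 y)
    rw [integral_pi_gaussianReal_eq_integral_stdGaussian]
    simpa [PiLp.inner_apply, EuclideanSpace.norm_eq, mul_comm] using key
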